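/- Let Σ = {a < b < c} and suppose w = xacyca and w' = xcayac for some x, y ∈ Σ*. Then the circular words [w] and [w'] are M-equivalent (i.e., Ψ_Σ([w]) = Ψ_Σ([w'])) if and only if |y|_b·(|x|_a − |x|_c) = |x|_b·(|y|_a − |y|_c). -/

import Mathlib

/-- The number of occurrences of `v` as a scattered subword (subsequence) of `w`:
the number of strictly increasing sequences of positions in `w` spelling out `v`. -/
def subwordCount {α : Type*} [DecidableEq α] (w v : List α) : ℕ :=
  w.sublists.count v

/-- The conjugacy class (circular word) `[w]` of `w`: the set of all cyclic shifts of `w`. -/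
def conjClass {α : Type*} [DecidableEq α] (w : List α) : Finset (List α) :=
  insert w ((Finset.range w.length).image w.rotate)

/-- The average subword count of `v` in the circular word `[w]`:
`|[w]|_v = (1/|[w]|) ∑_{u ∈ [w]} |u|_v`. -/
def circCount {α : Type*} [DecidableEq α] (w v : List α) : ℚ :=
  (∑ u ∈ conjClass w, (subwordCount u v : ℚ)) / ((conjClass w).card : ℚ)

/-- The Parikh matrix of the letter `q` of the ordered alphabet `Fin s`:
the identity matrix with an extra `1` in entry `(q, q+1)`. -/
def parikhLetter {s : ℕ} (q : Fin s) : Matrix (Fin (s + 1)) (Fin (s + 1)) ℚ :=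
  1 + Matrix.single q.castSucc q.succ 1

/-- The Parikh matrix mapping over the ordered alphabet `Fin s` (a monoid morphism). -/
def parikhMatrix {s : ℕ} (w : List (Fin s)) : Matrix (Fin (s + 1)) (Fin (s + 1)) ℚ :=
  (w.map parikhLetter).prod

/-- The Parikh matrix of the circular word `[w]`:
`Ψ([w]) = (1/|[w]|) ∑_{u ∈ [w]} Ψ(u)`. -/
def circParikh {s : ℕ} (w : List (Fin s)) : Matrix (Fin (s + 1)) (Fin (s + 1)) ℚ :=
  (((conjClass w).card : ℚ))⁻¹ • ∑ u ∈ conjClass w, parikhMatrix u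

/-- The alternate matrix: `(i,j)` entry is `(-1)^(i+j)` times the `(i,j)` entry of `A`. -/
def altMatrix {n : ℕ} (A : Matrix (Fin n) (Fin n) ℚ) : Matrix (Fin n) (Fin n) ℚ :=
  Matrix.of fun i j => (-1 : ℚ) ^ (i.val + j.val) * A i j

/-- The word `a_i a_{i+1} ⋯ a_j` over the ordered alphabet `Fin s`. -/
def segWord {s : ℕ} (i j : Fin s) : List (Fin s) :=
  (List.range (j.val - i.val + 1)).attach.map fun t =>
    ⟨i.val + t.1, by
      have ht := List.mem_range.mp t.2
      have hi := i.isLt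
      have hj := j.isLt
      omega⟩

/-!
Averaging over the circular word `[w]` is the same as averaging over the `|w|` rotations of `w`,
so for words of equal length `Ψ([w]) = Ψ([w'])` means `∑ᵢ Ψ(rotᵢ w) = ∑ᵢ Ψ(rotᵢ w')`. Splitting
this sum along `w = x·ac·y·ca`, all contributions of `x` and `y` agree with those for
`w' = x·ca·y·ac` because `Ψ(ac) = Ψ(ca)`; what remains is `C D A - A D C` with `A = Ψ(a)`,
`C = Ψ(c)` and `D = Ψ(y) Ψ(ac) Ψ(x) - Ψ(x) Ψ(ac) Ψ(y)`. Over three letters all Parikh matrices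
are upper unitriangular, and multiplying out shows that this matrix is
`(|y|_b (|x|_a - |x|_c) - |x|_b (|y|_a - |y|_c))` times the matrix unit in the corner.
-/

open Finset

section Rotations

variable {α : Type*} [DecidableEq α]

lemma conjClass_eq_image_rotate {w : List α} (hw : w ≠ []) :
    conjClass w = (range w.length).image w.rotate :=
  insert_eq_self.mpr <| mem_image.mpr ⟨0, mem_range.mpr (List.length_pos_iff.mpr hw), w.rotate_zero⟩

/-- Shifting by `n - j` maps the rotations hitting `w.rotate j` onto those hitting `w`. -/
lemma card_filter_rotate_eq_rotate (w : List α) {j : ℕ} (hj : j < w.length) :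
    #{i ∈ range w.length | w.rotate i = w.rotate j} = #{i ∈ range w.length | w.rotate i = w} := by
  set n := w.length
  have hn : 0 < n := j.zero_le.trans_lt hj
  refine card_bij (fun i _ => (i + (n - j)) % n) ?_ ?_ ?_
  · intro i hi
    simp only [mem_filter, mem_range] at hi ⊢
    refine ⟨Nat.mod_lt _ hn, ?_⟩
    rw [List.rotate_mod, ← List.rotate_rotate, hi.2, List.rotate_rotate,
      Nat.add_sub_cancel' hj.le, List.rotate_length]
  · intro i₁ h₁ i₂ h₂ h
    simp only [mem_filter, mem_range] at h₁ h₂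
    have : i₁ % n = i₂ % n := Nat.ModEq.add_right_cancel' (n - j) h
    rwa [Nat.mod_eq_of_lt h₁.1, Nat.mod_eq_of_lt h₂.1] at this
  · intro i hi
    simp only [mem_filter, mem_range] at hi
    refine ⟨(i + j) % n, mem_filter.mpr ⟨mem_range.mpr (Nat.mod_lt _ hn), ?_⟩, ?_⟩
    · rw [List.rotate_mod, ← List.rotate_rotate, hi.2]
    · rw [Nat.mod_add_mod, add_assoc, Nat.add_sub_cancel' hj.le, Nat.add_mod_right,
        Nat.mod_eq_of_lt hi.1]

/-- Every conjugate of `w` is reached by equally many rotations. -/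
lemma inv_card_conjClass_smul_sum {M : Type*} [AddCommGroup M] [Module ℚ M]
    (f : List α → M) {w : List α} (hw : w ≠ []) :
    ((conjClass w).card : ℚ)⁻¹ • ∑ u ∈ conjClass w, f u =
      (w.length : ℚ)⁻¹ • ∑ i ∈ range w.length, f (w.rotate i) := by
  set n := w.length
  have hmaps : ∀ i ∈ range n, w.rotate i ∈ conjClass w := fun i hi => by
    rw [conjClass_eq_image_rotate hw]
    exact mem_image_of_mem _ hi
  set c := #{i ∈ range n | w.rotate i = w}
  have hc : c ≠ 0 := (card_pos.mpr
    ⟨0, mem_filter.mpr ⟨mem_range.mpr (List.length_pos_iff.mpr hw), w.rotate_zero⟩⟩).ne'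
  have hfiber : ∀ u ∈ conjClass w, #{i ∈ range n | w.rotate i = u} = c := fun u hu => by
    rw [conjClass_eq_image_rotate hw] at hu
    obtain ⟨j, hj, rfl⟩ := mem_image.mp hu
    exact card_filter_rotate_eq_rotate w (mem_range.mp hj)
  have hn : n = (conjClass w).card * c := by
    rw [← card_range n, card_eq_sum_card_fiberwise hmaps, sum_congr rfl hfiber, sum_const,
      smul_eq_mul]
  have hsum : ∑ i ∈ range n, f (w.rotate i) = c • ∑ u ∈ conjClass w, f u := by
    rw [← sum_fiberwise_of_maps_to hmaps, smul_sum]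
    refine sum_congr rfl fun u hu => ?_
    rw [← hfiber u hu, ← sum_const]
    exact sum_congr rfl fun i hi => by rw [(mem_filter.mp hi).2]
  rw [hsum, ← Nat.cast_smul_eq_nsmul ℚ, smul_smul, hn, Nat.cast_mul, mul_inv,
    mul_assoc, inv_mul_cancel₀ (Nat.cast_ne_zero.mpr hc), mul_one]

end Rotations

section Parikh

variable {s : ℕ}

lemma parikhMatrix_cons (q : Fin s) (w : List (Fin s)) :
    parikhMatrix (q :: w) = parikhLetter q * parikhMatrix w := by
  simp [parikhMatrix]

lemma parikhMatrix_append (u v : List (Fin s)) :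
    parikhMatrix (u ++ v) = parikhMatrix u * parikhMatrix v := by
  simp [parikhMatrix]

/-- `∑ᵢ Ψ(wᵢ₊₁ ⋯ wₙ) B Ψ(w₁ ⋯ wᵢ)`: for `B = 1` the sum of the Parikh matrices of all rotations
of `w`; a general `B` makes it split along concatenations. -/
def rotationSum (w : List (Fin s)) (B : Matrix (Fin (s + 1)) (Fin (s + 1)) ℚ) :
    Matrix (Fin (s + 1)) (Fin (s + 1)) ℚ :=
  ∑ i ∈ range w.length, parikhMatrix (w.drop i) * B * parikhMatrix (w.take i)

lemma rotationSum_one (w : List (Fin s)) :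
    rotationSum w 1 = ∑ i ∈ range w.length, parikhMatrix (w.rotate i) :=
  sum_congr rfl fun i hi => by
    rw [List.rotate_eq_drop_append_take (mem_range.mp hi).le, parikhMatrix_append, mul_one]

lemma rotationSum_append (u v : List (Fin s)) (B : Matrix (Fin (s + 1)) (Fin (s + 1)) ℚ) :
    rotationSum (u ++ v) B =
      rotationSum u (parikhMatrix v * B) + rotationSum v (B * parikhMatrix u) := by
  rw [rotationSum, List.length_append, sum_range_add]
  congr 1
  · refine sum_congr rfl fun i hi => ?_
    have hi : i ≤ u.length := (mem_range.mp hi).le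
    rw [List.drop_append_of_le_length hi, List.take_append_of_le_length hi, parikhMatrix_append]
    simp only [mul_assoc]
  · refine sum_congr rfl fun i _ => ?_
    rw [List.drop_length_add_append, List.take_length_add_append, parikhMatrix_append]
    simp only [mul_assoc]

lemma rotationSum_pair (q r : Fin s) (B : Matrix (Fin (s + 1)) (Fin (s + 1)) ℚ) :
    rotationSum [q, r] B = parikhMatrix [q, r] * B + parikhLetter r * B * parikhLetter q := by
  simp [rotationSum, sum_range_succ, parikhMatrix]

lemma circParikh_eq_inv_length_smul_rotationSum {w : List (Fin s)} (hw : w ≠ []) :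
    circParikh w = (w.length : ℚ)⁻¹ • rotationSum w 1 := by
  rw [circParikh, inv_card_conjClass_smul_sum _ hw, rotationSum_one]

lemma rotationSum_sub_rotationSum_swap {q r : Fin s}
    (hqr : Commute (parikhLetter q) (parikhLetter r)) (x y : List (Fin s)) :
    rotationSum (x ++ [q, r] ++ y ++ [r, q]) 1 - rotationSum (x ++ [r, q] ++ y ++ [q, r]) 1 =
      let D := parikhMatrix y * parikhMatrix [q, r] * parikhMatrix x -
        parikhMatrix x * parikhMatrix [q, r] * parikhMatrix y
      parikhLetter r * D * parikhLetter q - parikhLetter q * D * parikhLetter r := by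
  have hswap : parikhMatrix [r, q] = parikhMatrix [q, r] := by
    simp [parikhMatrix, hqr.eq]
  simp only [rotationSum_append, rotationSum_pair, parikhMatrix_append, hswap, one_mul, mul_one]
  noncomm_ring

end Parikh

def unitri (a b c p q r : ℚ) : Matrix (Fin 4) (Fin 4) ℚ :=
  !![1, a, p, r; 0, 1, b, q; 0, 0, 1, c; 0, 0, 0, 1]

lemma unitri_mul (a b c p q r a' b' c' p' q' r' : ℚ) :
    unitri a b c p q r * unitri a' b' c' p' q' r' =
      unitri (a + a') (b + b') (c + c') (p + p' + a * b') (q + q' + b * c')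
        (r + r' + a * q' + p * c') := by
  ext i j
  fin_cases i <;> fin_cases j <;>
    simp [unitri, Matrix.mul_apply, Fin.sum_univ_succ] <;> ring

lemma one_eq_unitri : (1 : Matrix (Fin 4) (Fin 4) ℚ) = unitri 0 0 0 0 0 0 := by
  ext i j
  fin_cases i <;> fin_cases j <;> simp [unitri]

lemma parikhLetter_zero : parikhLetter (0 : Fin 3) = unitri 1 0 0 0 0 0 := by
  ext i j
  fin_cases i <;> fin_cases j <;> simp [unitri, parikhLetter]

lemma parikhLetter_one : parikhLetter (1 : Fin 3) = unitri 0 1 0 0 0 0 := by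
  ext i j
  fin_cases i <;> fin_cases j <;> simp [unitri, parikhLetter]

lemma parikhLetter_two : parikhLetter (2 : Fin 3) = unitri 0 0 1 0 0 0 := by
  ext i j
  fin_cases i <;> fin_cases j <;> simp [unitri, parikhLetter]

lemma exists_parikhMatrix_eq_unitri (w : List (Fin 3)) : ∃ p q r,
    parikhMatrix w = unitri (w.count 0) (w.count 1) (w.count 2) p q r := by
  induction w with
  | nil => exact ⟨0, 0, 0, by simpa [parikhMatrix] using one_eq_unitri⟩
  | cons a w ih =>
    obtain ⟨p, q, r, hw⟩ := ih
    rw [parikhMatrix_cons, hw]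
    fin_cases a <;> simp only [Fin.zero_eta, Fin.mk_one, Fin.reduceFinMk]
    · exact ⟨p + w.count 1, q, r + q, by
        rw [parikhLetter_zero, unitri_mul]; congr 1 <;> simp [add_comm]⟩
    · exact ⟨p, q + w.count 2, r, by
        rw [parikhLetter_one, unitri_mul]; congr 1 <;> simp [add_comm]⟩
    · exact ⟨p, q, r, by
        rw [parikhLetter_two, unitri_mul]; congr 1 <;> simp [add_comm]⟩

lemma commute_parikhLetter_zero_two : Commute (parikhLetter (0 : Fin 3)) (parikhLetter 2) := by
  rw [Commute, SemiconjBy, parikhLetter_zero, parikhLetter_two, unitri_mul, unitri_mul]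
  norm_num

lemma parikhMatrix_zero_two : parikhMatrix [(0 : Fin 3), 2] = unitri 1 0 1 0 0 0 := by
  simp [parikhMatrix, parikhLetter_zero, parikhLetter_two, unitri_mul]

lemma twisted_commutator_unitri (x₀ x₁ x₂ p q r y₀ y₁ y₂ p' q' r' : ℚ) :
    let X := unitri x₀ x₁ x₂ p q r
    let Y := unitri y₀ y₁ y₂ p' q' r'
    let D := Y * unitri 1 0 1 0 0 0 * X - X * unitri 1 0 1 0 0 0 * Y
    unitri 0 0 1 0 0 0 * D * unitri 1 0 0 0 0 0 - unitri 1 0 0 0 0 0 * D * unitri 0 0 1 0 0 0 =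
      (y₁ * (x₀ - x₂) - x₁ * (y₀ - y₂)) • Matrix.single 0 3 1 := by
  simp only [mul_sub, sub_mul, unitri_mul]
  ext i j
  fin_cases i <;> fin_cases j <;> simp [unitri] <;> ring

/-- Theorem 33: over `{a < b < c} = Fin 3` (with `a = 0`, `b = 1`, `c = 2`), if `w = xacyca`
and `w' = xcayac`, then `[w] ≡_M [w']` iff `|y|_b(|x|_a − |x|_c) = |x|_b(|y|_a − |y|_c)`. -/
theorem stmt_16 (x y : List (Fin 3)) :
    circParikh (x ++ [0, 2] ++ y ++ [2, 0]) = circParikh (x ++ [2, 0] ++ y ++ [0, 2]) ↔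
      (y.count 1 : ℤ) * ((x.count 0 : ℤ) - (x.count 2 : ℤ)) =
        (x.count 1 : ℤ) * ((y.count 0 : ℤ) - (y.count 2 : ℤ)) := by
  have hlen : (x ++ [2, 0] ++ y ++ [0, 2]).length = (x ++ [0, 2] ++ y ++ [2, 0]).length := by
    simp
  have hlen_ne : ((x ++ [0, 2] ++ y ++ [2, 0]).length : ℚ)⁻¹ ≠ 0 :=
    inv_ne_zero (Nat.cast_ne_zero.mpr (by simp))
  rw [circParikh_eq_inv_length_smul_rotationSum (by simp),
    circParikh_eq_inv_length_smul_rotationSum (by simp), hlen,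
    (smul_right_injective _ hlen_ne).eq_iff, ← sub_eq_zero,
    rotationSum_sub_rotationSum_swap commute_parikhLetter_zero_two]
  obtain ⟨p, q, r, hx⟩ := exists_parikhMatrix_eq_unitri x
  obtain ⟨p', q', r', hy⟩ := exists_parikhMatrix_eq_unitri y
  rw [hx, hy, parikhMatrix_zero_two, parikhLetter_zero, parikhLetter_two,
    twisted_commutator_unitri, smul_eq_zero, sub_eq_zero,
    or_iff_left fun h => by simpa using congrFun₂ h 0 3]
  norm_cast
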